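/- Let P be a finite poset with gap(P) = c(P) + |P| - (max(P) + min(P) + edges(P)) = 1. Then the set of elements of P having crossing number one forms a nonempty saturated chain, and all other elements of P have crossing number zero. -/

import Mathlib

open Classical

variable {α : Type*}

/-- A saturated chain from `v` up to a maximal element: a list `v = v₀ ⋖ v₁ ⋖ … ⋖ vₖ`
with `vₖ` maximal. -/
def UpChain [PartialOrder α] (v : α) (l : List α) : Prop :=
  l.Chain' (· ⋖ ·) ∧ l.head? = some v ∧ ∃ m, l.getLast? = some m ∧ IsMax m

/-- A saturated chain from a minimal element up to `v`. -/
def DownChain [PartialOrder α] (v : α) (l : List α) : Prop :=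
  l.Chain' (· ⋖ ·) ∧ (∃ m, l.head? = some m ∧ IsMin m) ∧ l.getLast? = some v

/-- `uc v` : the number of saturated chains from `v` up to a maximal element. -/
noncomputable def uc [PartialOrder α] (v : α) : ℕ := Nat.card {l : List α // UpChain v l}

/-- `dc v` : the number of saturated chains from `v` down to a minimal element. -/
noncomputable def dc [PartialOrder α] (v : α) : ℕ := Nat.card {l : List α // DownChain v l}

/-- A maximal chain: a saturated chain from a minimal element to a maximal element. -/
def IsMaxChainList [PartialOrder α] (l : List α) : Prop :=
  l.Chain' (· ⋖ ·) ∧ (∃ m, l.head? = some m ∧ IsMin m) ∧ ∃ m, l.getLast? = some m ∧ IsMax m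

/-- `c(P)`: the number of maximal chains. -/
noncomputable def numMaxChains (α : Type*) [PartialOrder α] : ℕ :=
  Nat.card {l : List α // IsMaxChainList l}

/-- `max(P)`: the number of maximal elements. -/
noncomputable def numMax (α : Type*) [PartialOrder α] : ℕ := Nat.card {v : α // IsMax v}

/-- `min(P)`: the number of minimal elements. -/
noncomputable def numMin (α : Type*) [PartialOrder α] : ℕ := Nat.card {v : α // IsMin v}

/-- `edges(P)`: the number of cover relations (edges of the Hasse diagram). -/
noncomputable def numEdges (α : Type*) [PartialOrder α] : ℕ :=
  Nat.card {p : α × α // p.1 ⋖ p.2}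

/-- `gap(P) = c(P) + |P| - (max(P) + min(P) + edges(P))`. -/
noncomputable def gap (α : Type*) [PartialOrder α] : ℤ :=
  (numMaxChains α : ℤ) + Nat.card α - ((numMax α : ℤ) + numMin α + numEdges α)

/-- The crossing number `(uc(v)-1)(dc(v)-1)` of `v`. -/
noncomputable def crossingNumber [PartialOrder α] (v : α) : ℕ := (uc v - 1) * (dc v - 1)

/-- `c` is the center of an X-shaped subposet: there are `a, b < c < d, e`
with `a ∥ b` and `d ∥ e`. -/
def IsXCenter [PartialOrder α] (c : α) : Prop :=
  ∃ a b d e : α, a < c ∧ b < c ∧ c < d ∧ c < e ∧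
    ¬ a ≤ b ∧ ¬ b ≤ a ∧ ¬ d ≤ e ∧ ¬ e ≤ d

/-- `P` contains an X-shaped subposet. -/
def HasX (α : Type*) [PartialOrder α] : Prop := ∃ c : α, IsXCenter c

/-!
Write `j w` for the number of lower covers of `w`. Counting maximal chains by their bottom and
edges by their top, and using `uc u = ∑_{u ⋖ w} uc w`, the gap becomes the sum of the
non-negative terms `(uc w - 1) (j w - 1)` over the non-minimal `w`. If the gap is `1`, exactly one
element `b` has `uc b = j b = 2`, and every other `v` of non-zero crossing number has a unique
lower cover, which again has non-zero crossing number and the same `dc`. Descending from such a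
`v` must end at `b`, so `b ≤ v` and `dc v = dc b`; and `dc b = 2` because the two lower covers of
`b` have crossing number zero and `uc ≥ 2`, hence `dc = 1`. The dual poset supplies a top `t` with
the symmetric properties, so the elements of non-zero crossing number all have `uc = dc = 2` and
form the saturated chain climbing from `b` to `t` through unique upper covers.
-/

open Finset OrderDual

section Chains
variable [PartialOrder α] {v w : α} {l : List α}

lemma List.IsChain.nodup_of_covBy (h : l.IsChain (· ⋖ ·)) : l.Nodup :=
  (List.isChain_iff_pairwise.mp (h.imp fun _ _ h => h.lt)).imp ne_of_lt

lemma finite_of_isChain_covBy [Finite α] (P : List α → Prop)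
    (hP : ∀ l, P l → l.IsChain (· ⋖ ·)) : Finite {l : List α // P l} := by
  have := Fintype.ofFinite α
  exact ((List.finite_length_le α (Fintype.card α)).subset
    fun l hl => (hP l hl).nodup_of_covBy.length_le_card).to_subtype

instance [Finite α] (v : α) : Finite {l : List α // UpChain v l} :=
  finite_of_isChain_covBy _ fun _ h => h.1

lemma upChain_singleton (h : IsMax v) : UpChain v [v] :=
  ⟨List.isChain_singleton v, rfl, v, rfl, h⟩

lemma UpChain.eq_cons (hl : UpChain v l) : ∃ t, l = v :: t := by
  obtain ⟨-, hh, -⟩ := hl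
  cases l with
  | nil => simp at hh
  | cons a t => exact ⟨t, by simpa using hh⟩

lemma UpChain.head_unique (hv : UpChain v l) (hw : UpChain w l) : v = w :=
  Option.some_injective _ (hv.2.1.symm.trans hw.2.1)

lemma UpChain.cons (hvw : v ⋖ w) (hl : UpChain w l) : UpChain v (v :: l) := by
  obtain ⟨t, rfl⟩ := hl.eq_cons
  obtain ⟨hc, -, m, hlast, hm⟩ := hl
  exact ⟨List.isChain_cons_cons.mpr ⟨hvw, hc⟩, rfl, m, by rwa [List.getLast?_cons_cons], hm⟩

lemma UpChain.eq_singleton_of_isMax (h : IsMax v) (hl : UpChain v l) : l = [v] := by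
  obtain ⟨t, rfl⟩ := hl.eq_cons
  cases t with
  | nil => rfl
  | cons w t =>
    have hvw : v ⋖ w := (List.isChain_cons_cons.mp hl.1).1
    exact absurd (h hvw.le) hvw.lt.not_ge

lemma UpChain.exists_covBy (hv : ¬IsMax v) (hl : UpChain v l) :
    ∃ w t, v ⋖ w ∧ UpChain w t ∧ l = v :: t := by
  obtain ⟨t, rfl⟩ := hl.eq_cons
  obtain ⟨hc, -, m, hlast, hm⟩ := hl
  cases t with
  | nil =>
    obtain rfl : v = m := by simpa using hlast
    exact absurd hm hv
  | cons w t =>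
    obtain ⟨hvw, hc⟩ := List.isChain_cons_cons.mp hc
    exact ⟨w, w :: t, hvw, ⟨hc, rfl, m, by rwa [List.getLast?_cons_cons] at hlast, hm⟩, rfl⟩

lemma exists_upChain [Finite α] (v : α) : ∃ l, UpChain v l := by
  induction v using WellFoundedGT.induction with
  | _ v ih =>
    by_cases h : IsMax v
    · exact ⟨[v], upChain_singleton h⟩
    · obtain ⟨w, hw⟩ := exists_covBy_of_wellFoundedLT h
      obtain ⟨l, hl⟩ := ih w hw.lt
      exact ⟨v :: l, hl.cons hw⟩

lemma uc_of_isMax (hv : IsMax v) : uc v = 1 := by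
  rw [uc, Nat.card_eq_one_iff_unique]
  exact ⟨⟨fun ⟨l₁, h₁⟩ ⟨l₂, h₂⟩ => Subtype.ext ((h₁.eq_singleton_of_isMax hv).trans
    (h₂.eq_singleton_of_isMax hv).symm)⟩, ⟨⟨[v], upChain_singleton hv⟩⟩⟩

lemma one_le_uc [Finite α] (v : α) : 1 ≤ uc v := by
  obtain ⟨l, hl⟩ := exists_upChain v
  have : Nonempty {l : List α // UpChain v l} := ⟨⟨l, hl⟩⟩
  exact Nat.card_pos

end Chains

section Duality
variable [PartialOrder α] {v : α} {l : List α}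

def dualReverse : List α ≃ List αᵒᵈ where
  toFun l := (l.map toDual).reverse
  invFun l := (l.map ofDual).reverse
  left_inv l := by simp [List.map_reverse]
  right_inv l := by simp [List.map_reverse]

lemma isChain_covBy_dualReverse :
    (dualReverse l).IsChain (· ⋖ ·) ↔ l.IsChain (· ⋖ ·) := by
  simp [dualReverse, List.isChain_reverse, List.isChain_map]

lemma upChain_dualReverse : UpChain (toDual v) (dualReverse l) ↔ DownChain v l := by
  refine and_congr isChain_covBy_dualReverse ?_
  simp [dualReverse, List.head?_reverse, and_comm]

lemma downChain_dualReverse : DownChain (toDual v) (dualReverse l) ↔ UpChain v l := by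
  refine and_congr isChain_covBy_dualReverse ?_
  simp [dualReverse, List.head?_reverse, and_comm]

lemma isMaxChainList_dualReverse : IsMaxChainList (dualReverse l) ↔ IsMaxChainList l := by
  refine and_congr isChain_covBy_dualReverse ?_
  simp [dualReverse, List.head?_reverse, and_comm]

lemma uc_toDual (v : α) : uc (toDual v) = dc v :=
  (Nat.card_congr (dualReverse.subtypeEquiv fun _ => upChain_dualReverse.symm)).symm

lemma dc_toDual (v : α) : dc (toDual v) = uc v :=
  (Nat.card_congr (dualReverse.subtypeEquiv fun _ => downChain_dualReverse.symm)).symm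

lemma crossingNumber_toDual (v : α) : crossingNumber (toDual v) = crossingNumber v := by
  rw [crossingNumber, crossingNumber, uc_toDual, dc_toDual, mul_comm]

lemma gap_orderDual : gap αᵒᵈ = gap α := by
  have hc : numMaxChains αᵒᵈ = numMaxChains α :=
    (Nat.card_congr (dualReverse.subtypeEquiv fun _ => isMaxChainList_dualReverse.symm)).symm
  have hmax : numMax αᵒᵈ = numMin α :=
    (Nat.card_congr (toDual.subtypeEquiv fun _ => isMax_toDual_iff)).symm
  have hmin : numMin αᵒᵈ = numMax α :=
    (Nat.card_congr (toDual.subtypeEquiv fun _ => isMin_toDual_iff)).symm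
  have he : numEdges αᵒᵈ = numEdges α :=
    (Nat.card_congr (((Equiv.prodComm α α).trans (toDual.prodCongr toDual)).subtypeEquiv
      fun _ => toDual_covBy_toDual_iff.symm)).symm
  have hcard : Nat.card αᵒᵈ = Nat.card α := rfl
  rw [gap, gap, hc, hmax, hmin, he, hcard]
  ring

lemma dc_of_isMin (hv : IsMin v) : dc v = 1 := by
  rw [← uc_toDual, uc_of_isMax hv.toDual]

lemma one_le_dc [Finite α] (v : α) : 1 ≤ dc v := by
  rw [← uc_toDual]; exact one_le_uc _

lemma crossingNumber_ne_zero_iff [Finite α] : crossingNumber v ≠ 0 ↔ 2 ≤ uc v ∧ 2 ≤ dc v := by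
  have := one_le_uc v; have := one_le_dc v
  rw [crossingNumber, Nat.mul_ne_zero_iff]; omega

end Duality

section Counting
variable [Fintype α] [PartialOrder α] {v w : α}

noncomputable def upperCovers (v : α) : Finset α := {w | v ⋖ w}

noncomputable def lowerCovers (v : α) : Finset α := {u | u ⋖ v}

@[simp] lemma mem_upperCovers : w ∈ upperCovers v ↔ v ⋖ w := by simp [upperCovers]

@[simp] lemma mem_lowerCovers : w ∈ lowerCovers v ↔ w ⋖ v := by simp [lowerCovers]

lemma uc_eq_sum (hv : ¬IsMax v) : uc v = ∑ w ∈ upperCovers v, uc w := by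
  let f (p : Σ w : upperCovers v, {l : List α // UpChain w.1 l}) : {l : List α // UpChain v l} :=
    ⟨v :: p.2.1, p.2.2.cons (mem_upperCovers.1 p.1.2)⟩
  have hf : f.Bijective := by
    refine ⟨?_, fun ⟨l, hl⟩ => ?_⟩
    · rintro ⟨w₁, l₁, h₁⟩ ⟨w₂, l₂, h₂⟩ heq
      obtain rfl : l₁ = l₂ := (List.cons.inj (congrArg Subtype.val heq)).2
      obtain rfl : w₁ = w₂ := Subtype.ext (h₁.head_unique h₂)
      rfl
    · obtain ⟨w, t, hvw, ht, rfl⟩ := hl.exists_covBy hv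
      exact ⟨⟨⟨w, mem_upperCovers.2 hvw⟩, t, ht⟩, rfl⟩
  rw [uc, ← Nat.card_congr (Equiv.ofBijective f hf), Nat.card_sigma]
  exact Finset.sum_coe_sort (upperCovers v) uc

lemma uc_le_uc_of_covBy (h : v ⋖ w) : uc w ≤ uc v := by
  rw [uc_eq_sum h.lt.not_isMax]
  exact Finset.single_le_sum (fun _ _ => Nat.zero_le _) (mem_upperCovers.2 h)

lemma numMaxChains_eq_sum : numMaxChains α = ∑ v : α with IsMin v, uc v := by
  let f (p : Σ v : {v : α // IsMin v}, {l : List α // UpChain v.1 l}) :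
      {l : List α // IsMaxChainList l} :=
    ⟨p.2.1, p.2.2.1, ⟨p.1.1, p.2.2.2.1, p.1.2⟩, p.2.2.2.2⟩
  have hf : f.Bijective := by
    refine ⟨?_, fun ⟨l, hc, ⟨m, hm, hmin⟩, hmax⟩ => ⟨⟨⟨m, hmin⟩, l, hc, hm, hmax⟩, rfl⟩⟩
    rintro ⟨v₁, l₁, h₁⟩ ⟨v₂, l₂, h₂⟩ heq
    obtain rfl : l₁ = l₂ := congrArg Subtype.val heq
    obtain rfl : v₁ = v₂ := Subtype.ext (h₁.head_unique h₂)
    rfl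
  rw [numMaxChains, ← Nat.card_congr (Equiv.ofBijective f hf), Nat.card_sigma,
    Finset.sum_subtype _ (fun v => Finset.mem_filter_univ (p := IsMin) v)]
  rfl

lemma dc_eq_sum (hv : ¬IsMin v) : dc v = ∑ u ∈ lowerCovers v, dc u := by
  rw [← uc_toDual, uc_eq_sum (isMax_toDual_iff.not.2 hv)]
  exact (Finset.sum_equiv toDual (by simp [toDual_covBy_toDual_iff])
    (fun u _ => (uc_toDual u).symm)).symm

lemma lowerCovers_eq_empty (hv : IsMin v) : lowerCovers v = ∅ :=
  Finset.eq_empty_of_forall_notMem fun _ hu => hv.not_lt (mem_lowerCovers.1 hu).lt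

lemma one_le_card_lowerCovers (hv : ¬IsMin v) : 1 ≤ #(lowerCovers v) :=
  let ⟨u, hu⟩ := exists_covBy_of_wellFoundedGT hv
  Finset.card_pos.2 ⟨u, mem_lowerCovers.2 hu⟩

lemma numEdges_eq_sum : numEdges α = ∑ w : α, #(lowerCovers w) := by
  rw [numEdges, Nat.card_eq_fintype_card, Fintype.card_subtype, Finset.card_filter,
    Fintype.sum_prod_type_right]
  exact Finset.sum_congr rfl fun w _ => (Finset.card_filter _ _).symm

lemma sum_uc_mul_card_lowerCovers :
    ∑ w : α, uc w * #(lowerCovers w) = ∑ u : α with ¬IsMax u, uc u := by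
  have hup (u : α) : ∑ w ∈ upperCovers u, uc w = if IsMax u then 0 else uc u := by
    split_ifs with hu
    · exact Finset.sum_eq_zero fun w hw => absurd (mem_upperCovers.1 hw).lt hu.not_lt
    · exact (uc_eq_sum hu).symm
  calc ∑ w : α, uc w * #(lowerCovers w) = ∑ w : α, ∑ u ∈ lowerCovers w, uc w := by
        simp [mul_comm]
    _ = ∑ u : α, ∑ w ∈ upperCovers u, uc w :=
        Finset.sum_comm' (by simp)
    _ = ∑ u : α with ¬IsMax u, uc u := by simp only [hup, Finset.sum_filter, ite_not]

-- At a minimal `w` the truncated `#(lowerCovers w) - 1` is `0`: minimal elements contribute nothing.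
lemma gap_eq_sum : gap α = ∑ w : α, ((uc w - 1) * (#(lowerCovers w) - 1) : ℕ) := by
  -- summed over `w`, the terms on the right give `c`, `|P|`, `max`, `min`, `edges` and `0`
  have hterm (w : α) : (((uc w - 1) * (#(lowerCovers w) - 1) : ℕ) : ℤ) =
      ((if IsMin w then (uc w : ℤ) else 0) + 1 - (if IsMax w then 1 else 0)
        - (if IsMin w then 1 else 0) - #(lowerCovers w))
        + ((uc w * #(lowerCovers w) : ℕ) - (if IsMax w then 0 else (uc w : ℤ))) := by
    have huc := one_le_uc w
    by_cases hmin : IsMin w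
    · rw [lowerCovers_eq_empty hmin]
      by_cases hmax : IsMax w <;> simp [hmin, hmax, uc_of_isMax]
    · have hj := one_le_card_lowerCovers hmin
      by_cases hmax : IsMax w
      · simp [hmin, hmax, uc_of_isMax]
      · simp [hmin, hmax, Nat.cast_sub, huc, hj]
        ring
  have hc : (numMaxChains α : ℤ) = ∑ w : α, if IsMin w then (uc w : ℤ) else 0 := by
    rw [numMaxChains_eq_sum, Finset.sum_filter]; push_cast; rfl
  have hmax : (numMax α : ℤ) = ∑ w : α, if IsMax w then 1 else 0 := by
    rw [numMax, Nat.card_eq_fintype_card, Fintype.card_subtype, Finset.card_filter]; push_cast; rfl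
  have hmin : (numMin α : ℤ) = ∑ w : α, if IsMin w then 1 else 0 := by
    rw [numMin, Nat.card_eq_fintype_card, Fintype.card_subtype, Finset.card_filter]; push_cast; rfl
  have hedges : (numEdges α : ℤ) = ∑ w : α, (#(lowerCovers w) : ℤ) := by
    rw [numEdges_eq_sum, Nat.cast_sum]
  have hmul : ∑ w : α, ((uc w * #(lowerCovers w) : ℕ) : ℤ) =
      ∑ w : α, if IsMax w then 0 else (uc w : ℤ) := by
    rw [← Nat.cast_sum, sum_uc_mul_card_lowerCovers, Finset.sum_filter]
    push_cast; simp only [ite_not]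
  have hcard : (Nat.card α : ℤ) = ∑ _w : α, 1 := by simp
  rw [Nat.cast_sum, Finset.sum_congr rfl fun w _ => hterm w]
  simp only [Finset.sum_add_distrib, Finset.sum_sub_distrib]
  rw [gap]
  linarith

end Counting

lemma Finset.exists_eq_one_of_sum_eq_one {ι : Type*} [DecidableEq ι] {s : Finset ι} {f : ι → ℕ}
    (h : ∑ i ∈ s, f i = 1) : ∃ i ∈ s, f i = 1 ∧ ∀ j ∈ s, j ≠ i → f j = 0 := by
  obtain ⟨i, hi, hfi⟩ := Finset.exists_ne_zero_of_sum_ne_zero (h.trans_ne one_ne_zero)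
  have hsplit := Finset.add_sum_erase s f hi
  have hrest : ∑ j ∈ s.erase i, f j = 0 := by omega
  exact ⟨i, hi, by omega, fun j hj hji => Finset.sum_eq_zero_iff.1 hrest j (mem_erase.2 ⟨hji, hj⟩)⟩

section Descent
variable [PartialOrder α] [Finite α] {S : α → Prop}

lemma le_and_eq_of_forall_exists_covBy {β : Type*} {b : α} {f : α → β}
    (h : ∀ v, S v → v ≠ b → ∃ u, S u ∧ u ⋖ v ∧ f u = f v) : ∀ v, S v → b ≤ v ∧ f v = f b := by
  intro v
  induction v using WellFoundedLT.induction with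
  | _ v ih =>
    intro hv
    by_cases hvb : v = b
    · exact ⟨hvb.ge, congrArg f hvb⟩
    · obtain ⟨u, hu, huv, hf⟩ := h v hv hvb
      obtain ⟨hbu, hfu⟩ := ih u huv.lt hu
      exact ⟨hbu.trans huv.le, hf.symm.trans hfu⟩

lemma exists_isChain_covBy_of_unique_upper_cover {t : α} (hle : ∀ v, S v → v ≤ t)
    (hup : ∀ v, S v → v ≠ t → ∃ w, S w ∧ v ⋖ w ∧ ∀ x, v ⋖ x → x = w) :
    ∀ v, S v → ∃ l : List α, l.IsChain (· ⋖ ·) ∧ l.head? = some v ∧ ∀ x, x ∈ l ↔ S x ∧ v ≤ x := by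
  intro v
  induction v using WellFoundedGT.induction with
  | _ v ih =>
    intro hv
    by_cases hvt : v = t
    · subst hvt
      refine ⟨[v], List.isChain_singleton v, rfl, fun x => ?_⟩
      simp only [List.mem_singleton]
      exact ⟨by rintro rfl; exact ⟨hv, le_rfl⟩, fun ⟨hx, hvx⟩ => (hle x hx).antisymm hvx⟩
    · obtain ⟨w, hw, hvw, huniq⟩ := hup v hv hvt
      obtain ⟨l, hl, hhead, hmem⟩ := ih w hvw.lt hw
      refine ⟨v :: l, List.isChain_cons.2 ⟨fun y hy => ?_, hl⟩, rfl, fun x => ?_⟩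
      · obtain rfl : y = w := by simpa [hhead] using hy.symm
        exact hvw
      rw [List.mem_cons, hmem]
      constructor
      · rintro (rfl | ⟨hx, hwx⟩)
        · exact ⟨hv, le_rfl⟩
        · exact ⟨hx, hvw.le.trans hwx⟩
      · rintro ⟨hx, hvx⟩
        rcases hvx.eq_or_lt with rfl | hvx
        · exact Or.inl rfl
        · obtain ⟨y, hvy, hyx⟩ := exists_covBy_le_of_lt hvx
          exact Or.inr ⟨hx, huniq y hvy ▸ hyx⟩

end Descent

section GapOne
variable [Fintype α] [PartialOrder α]

lemma exists_unique_branching_of_gap_eq_one (hgap : gap α = 1) :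
    ∃ b : α, uc b = 2 ∧ #(lowerCovers b) = 2 ∧
      ∀ v, v ≠ b → 2 ≤ uc v → ¬IsMin v → #(lowerCovers v) = 1 := by
  have hsum : ∑ w : α, (uc w - 1) * (#(lowerCovers w) - 1) = 1 := by
    exact_mod_cast gap_eq_sum.symm.trans hgap
  obtain ⟨b, -, hb, hrest⟩ := Finset.exists_eq_one_of_sum_eq_one hsum
  obtain ⟨hucb, hjb⟩ := mul_eq_one.1 hb
  refine ⟨b, by omega, by omega, fun v hvb huc hmin => ?_⟩
  have hj := one_le_card_lowerCovers hmin
  have := hrest v (Finset.mem_univ v) hvb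
  rw [mul_eq_zero] at this
  omega

lemma exists_bottom_of_gap_eq_one (hgap : gap α = 1) :
    ∃ b : α, crossingNumber b ≠ 0 ∧ (∀ v, crossingNumber v ≠ 0 → b ≤ v ∧ dc v = 2) ∧
      ∀ v, crossingNumber v ≠ 0 → v ≠ b →
        ∃ u, crossingNumber u ≠ 0 ∧ u ⋖ v ∧ ∀ x, x ⋖ v → x = u := by
  obtain ⟨b, hucb, hjb, hone⟩ := exists_unique_branching_of_gap_eq_one hgap
  have hdown (v : α) (hv : crossingNumber v ≠ 0) (hvb : v ≠ b) :
      ∃ u, crossingNumber u ≠ 0 ∧ u ⋖ v ∧ (∀ x, x ⋖ v → x = u) ∧ dc u = dc v := by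
    rw [crossingNumber_ne_zero_iff] at hv
    have hmin : ¬IsMin v := fun h => by simp [dc_of_isMin h] at hv
    obtain ⟨u, hu⟩ := Finset.card_eq_one.1 (hone v hvb hv.1 hmin)
    have huv : u ⋖ v := mem_lowerCovers.1 (hu ▸ Finset.mem_singleton_self u)
    have hdc : dc v = dc u := by rw [dc_eq_sum hmin, hu, Finset.sum_singleton]
    exact ⟨u, crossingNumber_ne_zero_iff.2 ⟨hv.1.trans (uc_le_uc_of_covBy huv), hdc ▸ hv.2⟩, huv,
      fun x hx => by simpa [hu] using mem_lowerCovers.2 hx, hdc.symm⟩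
  have hle := le_and_eq_of_forall_exists_covBy (f := dc) fun v hv hvb => by
    obtain ⟨u, hu, huv, -, hdc⟩ := hdown v hv hvb
    exact ⟨u, hu, huv, hdc⟩
  have hbmin : ¬IsMin b := fun h => by simp [lowerCovers_eq_empty h] at hjb
  -- the lower covers of `b` lie outside the crossing set, so each carries a single down-chain
  have hdcb : dc b = 2 := by
    rw [dc_eq_sum hbmin, ← hjb, Finset.card_eq_sum_ones]
    refine Finset.sum_congr rfl fun x hx => ?_
    have hxb := mem_lowerCovers.1 hx
    have hcx : crossingNumber x = 0 := by_contra fun h => hxb.lt.not_ge (hle x h).1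
    have := uc_le_uc_of_covBy hxb
    have := one_le_dc x
    rw [crossingNumber, mul_eq_zero] at hcx
    omega
  refine ⟨b, crossingNumber_ne_zero_iff.2 ⟨hucb.ge, hdcb.ge⟩,
    fun v hv => ⟨(hle v hv).1, (hle v hv).2.trans hdcb⟩, fun v hv hvb => ?_⟩
  obtain ⟨u, hu, huv, huniq, -⟩ := hdown v hv hvb
  exact ⟨u, hu, huv, huniq⟩

lemma exists_top_of_gap_eq_one (hgap : gap α = 1) :
    ∃ t : α, (∀ v, crossingNumber v ≠ 0 → v ≤ t ∧ uc v = 2) ∧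
      ∀ v, crossingNumber v ≠ 0 → v ≠ t →
        ∃ w, crossingNumber w ≠ 0 ∧ v ⋖ w ∧ ∀ x, v ⋖ x → x = w := by
  obtain ⟨t, -, hle, hdown⟩ := exists_bottom_of_gap_eq_one (α := αᵒᵈ) (gap_orderDual.trans hgap)
  have hS (v : α) : crossingNumber (toDual v) ≠ 0 ↔ crossingNumber v ≠ 0 := by
    rw [crossingNumber_toDual]
  refine ⟨ofDual t, fun v hv => ?_, fun v hv hvt => ?_⟩
  · obtain ⟨htv, hdc⟩ := hle (toDual v) ((hS v).2 hv)
    exact ⟨htv, by rwa [dc_toDual] at hdc⟩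
  · obtain ⟨w, hw, hwv, huniq⟩ := hdown (toDual v) ((hS v).2 hv) hvt
    exact ⟨ofDual w, (hS _).1 hw, toDual_covBy_toDual_iff.1 hwv,
      fun x hx => congrArg ofDual (huniq (toDual x) (toDual_covBy_toDual_iff.2 hx))⟩

end GapOne

theorem gap_one_crossing_structure (α : Type*) [Fintype α] [PartialOrder α]
    (hgap : gap α = 1) :
    ∃ l : List α, l ≠ [] ∧ l.Chain' (· ⋖ ·) ∧
      (∀ v ∈ l, crossingNumber v = 1) ∧ (∀ v : α, v ∉ l → crossingNumber v = 0) := by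
  obtain ⟨b, hb, hbot, -⟩ := exists_bottom_of_gap_eq_one hgap
  obtain ⟨t, htop, hup⟩ := exists_top_of_gap_eq_one hgap
  obtain ⟨l, hl, -, hmem⟩ := exists_isChain_covBy_of_unique_upper_cover
    (fun v hv => (htop v hv).1) hup b hb
  have hl_mem (v : α) : v ∈ l ↔ crossingNumber v ≠ 0 :=
    (hmem v).trans ⟨And.left, fun hv => ⟨hv, (hbot v hv).1⟩⟩
  refine ⟨l, List.ne_nil_of_mem ((hl_mem b).2 hb), hl, fun v hv => ?_,
    fun v hv => not_not.1 (mt (hl_mem v).2 hv)⟩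
  have hv := (hl_mem v).1 hv
  rw [crossingNumber, (htop v hv).2, (hbot v hv).2]
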